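/- Let m ∈ ℕ and let b₁,…,b_m : ℝⁿ → ℝ be locally integrable with [b⃗]_{***} < ∞. Then each b_i belongs to BMO, and moreover ‖b_i‖_BMO ≤ 2^m [b⃗]_{***} for every i = 1,…,m. -/

import Mathlib

open MeasureTheory ENNReal

noncomputable section

/-- Euclidean space ℝⁿ. -/
abbrev En (n : ℕ) := EuclideanSpace ℝ (Fin n)

/-- The (closed) cube in ℝⁿ centered at `c`, with side length `r` and sides
parallel to the coordinate axes. -/
def cube {n : ℕ} (c : En n) (r : ℝ) : Set (En n) := {y | ∀ i, |y i - c i| ≤ r / 2}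

/-- The m-fold product `Q × ⋯ × Q ⊆ (ℝⁿ)^m` of the cube `Q = Q(c, r)`. -/
def cubeProd {n : ℕ} (m : ℕ) (c : En n) (r : ℝ) : Set (Fin m → En n) :=
  Set.univ.pi fun _ => cube c r

/-- Average `b_Q = |Q|⁻¹ ∫_Q b` over the cube `Q = Q(c, r)`. -/
def cubeAvg {n : ℕ} (b : En n → ℝ) (c : En n) (r : ℝ) : ℝ :=
  (volume (cube c r)).toReal⁻¹ * ∫ x in cube c r, b x

/-- `[b]_* = sup_Q |Q|^{-(m+1)} ∫_Q ∫_{Q^m} |∑ᵢ (bᵢ(x) − bᵢ(yᵢ))| dy⃗ dx`. -/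
def bracketStar {n m : ℕ} (b : Fin m → En n → ℝ) : ℝ≥0∞ :=
  ⨆ (c : En n) (r : ℝ) (_ : 0 < r),
    (volume (cube c r) ^ (m + 1))⁻¹ *
      ∫⁻ x in cube c r, ∫⁻ y in cubeProd m c r,
        ENNReal.ofReal |∑ i, (b i x - b i (y i))|

/-- `[b]_{**} = sup_Q |Q|^{-m} ∫_{Q^m} |∑ᵢ (bᵢ(xᵢ) − (bᵢ)_Q)| dx⃗`. -/
def bracketStarStar {n m : ℕ} (b : Fin m → En n → ℝ) : ℝ≥0∞ :=
  ⨆ (c : En n) (r : ℝ) (_ : 0 < r),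
    (volume (cube c r) ^ m)⁻¹ *
      ∫⁻ x in cubeProd m c r,
        ENNReal.ofReal |∑ i, (b i (x i) - cubeAvg (b i) c r)|

/-- `[b]_{***} = sup_Q |Q|^{-2m} ∫_{Q^m} ∫_{Q^m} |∑ᵢ (bᵢ(xᵢ) − bᵢ(yᵢ))| dy⃗ dx⃗`. -/
def bracketStarStarStar {n m : ℕ} (b : Fin m → En n → ℝ) : ℝ≥0∞ :=
  ⨆ (c : En n) (r : ℝ) (_ : 0 < r),
    (volume (cube c r) ^ (2 * m))⁻¹ *
      ∫⁻ x in cubeProd m c r, ∫⁻ y in cubeProd m c r,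
        ENNReal.ofReal |∑ i, (b i (x i) - b i (y i))|

/-- The BMO norm `‖b‖_{BMO} = sup_Q |Q|⁻¹ ∫_Q |b(x) − b_Q| dx`. -/
def bmoNorm {n : ℕ} (b : En n → ℝ) : ℝ≥0∞ :=
  ⨆ (c : En n) (r : ℝ) (_ : 0 < r),
    (volume (cube c r))⁻¹ * ∫⁻ x in cube c r, ENNReal.ofReal |b x - cubeAvg b c r|

/-- A locally integrable function is in BMO if its BMO norm is finite. -/
def MemBMO {n : ℕ} (b : En n → ℝ) : Prop :=
  LocallyIntegrable b volume ∧ bmoNorm b < ⊤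

/-!
Fix a cube `Q` and average with respect to the probability measure `|Q|⁻¹ 1_Q dx` and its
powers. Integrating `∑ⱼ (bⱼ(xⱼ) - bⱼ(yⱼ))` in `y⃗` gives `∑ⱼ (bⱼ(xⱼ) - (bⱼ)_Q)`, and
integrating that further in the `xⱼ` with `j ≠ i` leaves `bᵢ(xᵢ) - (bᵢ)_Q`. Since
`|∫ F| ≤ ∫ |F|` at each of the two stages, the mean oscillation of `bᵢ` on `Q` is at most the
normalized double integral defining `[b⃗]_{***}` on `Q`, hence `‖bᵢ‖_BMO ≤ [b⃗]_{***}`.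
-/

open ProbabilityTheory

section PiMeasure

variable {E : Type*} [MeasurableSpace E] {μ : Measure E} {m : ℕ}

theorem lintegral_enorm_integral_insertNth_le [SigmaFinite μ] (i : Fin (m + 1))
    {G : (Fin (m + 1) → E) → ℝ} (hG : AEMeasurable G (Measure.pi fun _ => μ)) :
    ∫⁻ x, ‖∫ x', G (Fin.insertNth i x x') ∂Measure.pi (fun _ => μ)‖ₑ ∂μ
      ≤ ∫⁻ y, ‖G y‖ₑ ∂Measure.pi (fun _ => μ) := by
  have hpres := (measurePreserving_piFinSuccAbove (fun _ : Fin (m + 1) => μ) i).symm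
    (MeasurableEquiv.piFinSuccAbove (fun _ => E) i)
  calc ∫⁻ x, ‖∫ x', G (Fin.insertNth i x x') ∂Measure.pi (fun _ => μ)‖ₑ ∂μ
      ≤ ∫⁻ x, ∫⁻ x', ‖G (Fin.insertNth i x x')‖ₑ ∂Measure.pi (fun _ => μ) ∂μ :=
        lintegral_mono fun x => enorm_integral_le_lintegral_enorm _
    _ = ∫⁻ y, ‖G y‖ₑ ∂Measure.pi (fun _ => μ) := by
        rw [← hpres.lintegral_comp_emb (MeasurableEquiv.measurableEmbedding _)]
        exact (lintegral_prod _
          (hG.enorm.comp_quasiMeasurePreserving hpres.quasiMeasurePreserving)).symm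

variable [IsProbabilityMeasure μ]

theorem integral_comp_eval (j : Fin m) {f : E → ℝ} (hf : AEStronglyMeasurable f μ) :
    ∫ y, f (y j) ∂Measure.pi (fun _ => μ) = ∫ x, f x ∂μ := by
  have := measurePreserving_eval (fun _ : Fin m => μ) j
  rw [← integral_map this.measurable.aemeasurable (by rwa [this.map_eq]), this.map_eq]

theorem integrable_comp_eval (j : Fin m) {f : E → ℝ} (hf : Integrable f μ) :
    Integrable (fun y : Fin m → E => f (y j)) (Measure.pi fun _ => μ) :=
  ((measurePreserving_eval _ j).integrable_comp hf.aestronglyMeasurable).2 hf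

theorem integral_sum_sub_comp_eval {f : Fin m → E → ℝ} (hf : ∀ j, Integrable (f j) μ)
    (x : Fin m → E) :
    ∫ y, ∑ j, (f j (x j) - f j (y j)) ∂Measure.pi (fun _ => μ)
      = ∑ j, (f j (x j) - ∫ z, f j z ∂μ) := by
  have hint : ∀ j,
      Integrable (fun y : Fin m → E => f j (x j) - f j (y j)) (Measure.pi fun _ => μ) :=
    fun j => (integrable_const _).sub (integrable_comp_eval j (hf j))
  rw [integral_finsetSum _ fun j _ => hint j]
  refine Finset.sum_congr rfl fun j _ => ?_
  rw [integral_sub (integrable_const _) (integrable_comp_eval j (hf j)),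
    integral_comp_eval j (hf j).1]
  simp

theorem integral_sum_sub_integral_insertNth {f : Fin (m + 1) → E → ℝ}
    (hf : ∀ j, Integrable (f j) μ) (i : Fin (m + 1)) (x : E) :
    ∫ x', ∑ j, (f j ((Fin.insertNth i x x' : Fin (m + 1) → E) j) - ∫ z, f j z ∂μ)
        ∂Measure.pi (fun _ => μ) = f i x - ∫ z, f i z ∂μ := by
  have hint : ∀ k, Integrable
      (fun x' : Fin m → E => f (i.succAbove k) (x' k) - ∫ z, f (i.succAbove k) z ∂μ)
      (Measure.pi fun _ => μ) :=
    fun k => (integrable_comp_eval k (hf _)).sub (integrable_const _)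
  simp_rw [Fin.sum_univ_succAbove _ i, Fin.insertNth_apply_same, Fin.insertNth_apply_succAbove]
  rw [integral_add (integrable_const _) (integrable_finsetSum _ fun k _ => hint k),
    integral_finsetSum _ fun k _ => hint k]
  simp [integral_sub (integrable_comp_eval _ (hf _)) (integrable_const _),
    integral_comp_eval _ (hf _).1]

theorem lintegral_enorm_sub_integral_le (f : Fin m → E → ℝ) (hf : ∀ j, Integrable (f j) μ)
    (i : Fin m) :
    ∫⁻ x, ‖f i x - ∫ z, f i z ∂μ‖ₑ ∂μ ≤
      ∫⁻ x, ∫⁻ y, ‖∑ j, (f j (x j) - f j (y j))‖ₑ ∂Measure.pi (fun _ => μ)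
        ∂Measure.pi (fun _ => μ) := by
  obtain ⟨m, rfl⟩ : ∃ k, m = k + 1 := ⟨m - 1, by have := i.pos; omega⟩
  have hG : AEMeasurable (fun y : Fin (m + 1) → E => ∑ j, (f j (y j) - ∫ z, f j z ∂μ))
      (Measure.pi fun _ => μ) :=
    (integrable_finsetSum _ fun j _ => (integrable_comp_eval j (hf j)).sub
      (integrable_const _)).aemeasurable
  calc ∫⁻ x, ‖f i x - ∫ z, f i z ∂μ‖ₑ ∂μ
      = ∫⁻ x, ‖∫ x', ∑ j, (f j ((Fin.insertNth i x x' : Fin (m + 1) → E) j) - ∫ z, f j z ∂μ)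
          ∂Measure.pi (fun _ => μ)‖ₑ ∂μ := by
        simp_rw [integral_sum_sub_integral_insertNth hf i]
    _ ≤ ∫⁻ y, ‖∑ j, (f j (y j) - ∫ z, f j z ∂μ)‖ₑ ∂Measure.pi (fun _ => μ) :=
        lintegral_enorm_integral_insertNth_le i hG
    _ = ∫⁻ x, ‖∫ y, ∑ j, (f j (x j) - f j (y j)) ∂Measure.pi (fun _ => μ)‖ₑ
          ∂Measure.pi (fun _ => μ) := by
        simp_rw [integral_sum_sub_comp_eval hf]
    _ ≤ _ := lintegral_mono fun x => enorm_integral_le_lintegral_enorm _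

end PiMeasure

section Cond
variable {α : Type*} [MeasurableSpace α] {μ : Measure α} {s : Set α}

theorem lintegral_cond (f : α → ℝ≥0∞) : ∫⁻ x, f x ∂μ[|s] = (μ s)⁻¹ * ∫⁻ x in s, f x ∂μ := by
  rw [ProbabilityTheory.cond, lintegral_smul_measure, smul_eq_mul]

theorem integral_cond (f : α → ℝ) : ∫ x, f x ∂μ[|s] = (μ s).toReal⁻¹ * ∫ x in s, f x ∂μ := by
  rw [ProbabilityTheory.cond, integral_smul_measure, smul_eq_mul, toReal_inv]

theorem pi_cond [SigmaFinite μ] (m : ℕ) :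
    Measure.pi (fun _ : Fin m => μ[|s])
      = (μ s)⁻¹ ^ m • (Measure.pi fun _ => μ).restrict (Set.univ.pi fun _ => s) := by
  rw [Measure.restrict_pi_pi]
  refine (Measure.pi_eq (μ := fun _ : Fin m => μ[|s]) fun t _ => ?_)
  simp [Measure.pi_pi, ProbabilityTheory.cond, Finset.prod_mul_distrib]

theorem lintegral_lintegral_pi_cond [SigmaFinite μ] (hs : μ s ≠ 0) {m : ℕ}
    (Φ : (Fin m → α) → (Fin m → α) → ℝ≥0∞) :
    ∫⁻ x, ∫⁻ y, Φ x y ∂Measure.pi (fun _ => μ[|s]) ∂Measure.pi (fun _ => μ[|s])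
      = (μ s ^ (2 * m))⁻¹ * ∫⁻ x in Set.univ.pi fun _ => s, ∫⁻ y in Set.univ.pi fun _ => s,
          Φ x y ∂Measure.pi (fun _ => μ) ∂Measure.pi (fun _ => μ) := by
  have hc : (μ s)⁻¹ ^ m ≠ ∞ := pow_ne_top (inv_ne_top.2 hs)
  simp_rw [pi_cond, lintegral_smul_measure, smul_eq_mul, lintegral_const_mul' _ _ hc]
  rw [← mul_assoc, ← pow_add, ← two_mul, ENNReal.inv_pow]

end Cond

section Cube
variable {n : ℕ}

theorem cube_eq_preimage_Icc (c : En n) (r : ℝ) :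
    cube c r = WithLp.ofLp ⁻¹'
      Set.Icc (WithLp.ofLp c - fun _ => r / 2) (WithLp.ofLp c + fun _ => r / 2) := by
  ext y
  simp [cube, abs_sub_le_iff, Pi.le_def, forall_and, add_comm, and_comm]

theorem isCompact_cube (c : En n) (r : ℝ) : IsCompact (cube c r) := by
  rw [cube_eq_preimage_Icc]
  exact (PiLp.continuousLinearEquiv 2 ℝ _).toHomeomorph.isCompact_preimage.2 isCompact_Icc

theorem volume_cube (c : En n) (r : ℝ) : volume (cube c r) = ENNReal.ofReal r ^ n := by
  rw [cube_eq_preimage_Icc, (PiLp.volume_preserving_ofLp (Fin n)).measure_preimage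
    measurableSet_Icc.nullMeasurableSet, Real.volume_Icc_pi]
  simp [add_sub_sub_cancel]

theorem cubeAvg_eq_integral_cond (b : En n → ℝ) (c : En n) (r : ℝ) :
    cubeAvg b c r = ∫ x, b x ∂volume[|cube c r] :=
  (integral_cond b).symm

theorem cube_mean_oscillation_le {m : ℕ} {b : Fin m → En n → ℝ} {c : En n} {r : ℝ} (hr : 0 < r)
    (hb : ∀ j, IntegrableOn (b j) (cube c r)) (i : Fin m) :
    (volume (cube c r))⁻¹ * ∫⁻ x in cube c r, ENNReal.ofReal |b i x - cubeAvg (b i) c r| ≤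
      (volume (cube c r) ^ (2 * m))⁻¹ * ∫⁻ x in cubeProd m c r, ∫⁻ y in cubeProd m c r,
        ENNReal.ofReal |∑ j, (b j (x j) - b j (y j))| := by
  have hQ0 : volume (cube c r) ≠ 0 := by simp [volume_cube, hr]
  have hQtop : volume (cube c r) ≠ ∞ := by simp [volume_cube]
  have := cond_isProbabilityMeasure_of_finite hQ0 hQtop
  have hint : ∀ j, Integrable (b j) volume[|cube c r] :=
    fun j => (hb j).smul_measure (inv_ne_top.2 hQ0)
  simp_rw [← Real.enorm_eq_ofReal_abs, cubeAvg_eq_integral_cond, ← lintegral_cond, cubeProd,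
    volume_pi, ← lintegral_lintegral_pi_cond hQ0]
  exact lintegral_enorm_sub_integral_le _ hint i

theorem bmoNorm_le_bracketStarStarStar {m : ℕ} {b : Fin m → En n → ℝ}
    (hb : ∀ j, LocallyIntegrable (b j) volume) (i : Fin m) :
    bmoNorm (b i) ≤ bracketStarStarStar b :=
  iSup_mono fun c => iSup_mono fun r => iSup_mono fun hr =>
    cube_mean_oscillation_le hr (fun j => (hb j).integrableOn_isCompact (isCompact_cube c r)) i

end Cube

/-- if `b₁, …, b_m` are locally integrable with `[b]_{***} < ∞`,
then each `bᵢ` belongs to BMO, with `‖bᵢ‖_{BMO} ≤ 2^m [b]_{***}`. -/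
theorem memBMO_of_bracketStarStarStar_lt_top {n m : ℕ} (b : Fin m → En n → ℝ)
    (hb : ∀ i, LocallyIntegrable (b i) volume)
    (hfin : bracketStarStarStar b < ⊤) :
    ∀ i, MemBMO (b i) ∧ bmoNorm (b i) ≤ 2 ^ m * bracketStarStarStar b := by
  intro i
  have hle : bmoNorm (b i) ≤ 2 ^ m * bracketStarStarStar b :=
    (bmoNorm_le_bracketStarStarStar hb i).trans (le_mul_of_one_le_left' (one_le_pow₀ one_le_two))
  exact ⟨⟨hb i, hle.trans_lt (mul_lt_top (pow_lt_top ofNat_lt_top) hfin)⟩, hle⟩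

end
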